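/- arXiv:2208.03529 — 2 statements merged into one kernel-verified Lean document; each statement's English description precedes it below -/
import Mathlib

section
/- Let S = S(G, g, R, p) and S' = S(G', g', R', q) be two cone-represented sets in ℝ^n for the same closed convex cone K ⊆ ℝ^l. For any λ, ν ∈ K* satisfying ‖R Gᵀ λ‖₂ ≤ 1, ‖R' G'ᵀ ν‖₂ ≤ 1 and R Gᵀ λ + R' G'ᵀ ν = 0, weak duality holds: −⟨λ, G Rᵀ p + g⟩ − ⟨ν, G' R'ᵀ q + g'⟩ ≤ ‖z₁ − z₂‖₂ for every z₁ ∈ S and z₂ ∈ S'. -/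
open Matrix

/-- Euclidean (ℓ2) norm on `Fin m → ℝ`. -/
noncomputable def e2norm {m : ℕ} (x : Fin m → ℝ) : ℝ := Real.sqrt (∑ i, (x i) ^ 2)

/-- Dual cone of a set `K ⊆ ℝ^l`. -/
def dualCone {l : ℕ} (K : Set (Fin l → ℝ)) : Set (Fin l → ℝ) :=
  {y | ∀ x ∈ K, 0 ≤ y ⬝ᵥ x}

/-- The cone-represented set `S(G, g, R, p) = {z | ∃ y, g − G y ∈ K, z = R y + p}`. -/
def coneSet {n l : ℕ} (K : Set (Fin l → ℝ)) (G : Matrix (Fin l) (Fin n) ℝ)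
    (g : Fin l → ℝ) (R : Matrix (Fin n) (Fin n) ℝ) (p : Fin n → ℝ) : Set (Fin n → ℝ) :=
  {z | ∃ y, g - G *ᵥ y ∈ K ∧ z = R *ᵥ y + p}

lemma dot_transpose {l n : ℕ} (A : Matrix (Fin l) (Fin n) ℝ) (v : Fin l → ℝ) (w : Fin n → ℝ) :
    v ⬝ᵥ (A *ᵥ w) = (Aᵀ *ᵥ v) ⬝ᵥ w := by
  rw [Matrix.mulVec_transpose, Matrix.dotProduct_mulVec]

lemma e2norm_nonneg {m : ℕ} (x : Fin m → ℝ) : 0 ≤ e2norm x := Real.sqrt_nonneg _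

lemma e2norm_neg {m : ℕ} (x : Fin m → ℝ) : e2norm (-x) = e2norm x := by
  unfold e2norm; congr 1; apply Finset.sum_congr rfl; intros; simp [neg_pow]

lemma cs {m : ℕ} (a x : Fin m → ℝ) : a ⬝ᵥ x ≤ e2norm a * e2norm x := by
  simpa [dotProduct, e2norm] using Real.sum_mul_le_sqrt_mul_sqrt Finset.univ a x

theorem weak_duality_distance {n l : ℕ} (K : Set (Fin l → ℝ))
    (hKclosed : IsClosed K) (hKconv : Convex ℝ K)
    (hKcone : ∀ c : ℝ, 0 < c → ∀ x ∈ K, c • x ∈ K)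
    (hKint : (interior K).Nonempty)
    (G G' : Matrix (Fin l) (Fin n) ℝ) (g g' : Fin l → ℝ)
    (R R' : Matrix (Fin n) (Fin n) ℝ)
    (hR : R * Rᵀ = 1) (hR' : R' * R'ᵀ = 1)
    (p q : Fin n → ℝ)
    (lam nu : Fin l → ℝ) (hlam : lam ∈ dualCone K) (hnu : nu ∈ dualCone K)
    (hnorm : e2norm (R *ᵥ (Gᵀ *ᵥ lam)) ≤ 1)
    (hnorm' : e2norm (R' *ᵥ (G'ᵀ *ᵥ nu)) ≤ 1)
    (heq : R *ᵥ (Gᵀ *ᵥ lam) + R' *ᵥ (G'ᵀ *ᵥ nu) = 0) :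
    ∀ z₁ ∈ coneSet K G g R p, ∀ z₂ ∈ coneSet K G' g' R' q,
      -(lam ⬝ᵥ (G *ᵥ (Rᵀ *ᵥ p) + g)) - nu ⬝ᵥ (G' *ᵥ (R'ᵀ *ᵥ q) + g') ≤
        e2norm (z₁ - z₂) := by
  rintro z₁ ⟨y₁, hy₁K, rfl⟩ z₂ ⟨y₂, hy₂K, rfl⟩
  set a := R *ᵥ (Gᵀ *ᵥ lam) with ha
  have ha' : R' *ᵥ (G'ᵀ *ᵥ nu) = -a := by
    have := heq; linear_combination (norm := module) this
  have hRtR : Rᵀ * R = 1 := mul_eq_one_comm.mp hR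
  have hRtR' : R'ᵀ * R' = 1 := mul_eq_one_comm.mp hR'
  -- key identity: Gᵀ *ᵥ lam = Rᵀ *ᵥ a
  have hGl : Gᵀ *ᵥ lam = Rᵀ *ᵥ a := by
    rw [ha, Matrix.mulVec_mulVec, hRtR, Matrix.one_mulVec]
  have hGn : G'ᵀ *ᵥ nu = R'ᵀ *ᵥ (-a) := by
    rw [← ha', Matrix.mulVec_mulVec, hRtR', Matrix.one_mulVec]
  -- nonnegativity from dual cone
  have h1 : 0 ≤ lam ⬝ᵥ (g - G *ᵥ y₁) := hlam _ hy₁K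
  have h2 : 0 ≤ nu ⬝ᵥ (g' - G' *ᵥ y₂) := hnu _ hy₂K
  have e1 : lam ⬝ᵥ (G *ᵥ y₁) = a ⬝ᵥ (R *ᵥ y₁) := by
    rw [dot_transpose, hGl, dot_transpose]
  have e2 : nu ⬝ᵥ (G' *ᵥ y₂) = (-a) ⬝ᵥ (R' *ᵥ y₂) := by
    rw [dot_transpose, hGn, dot_transpose]
  have e3 : lam ⬝ᵥ (G *ᵥ (Rᵀ *ᵥ p)) = a ⬝ᵥ p := by
    rw [dot_transpose, hGl, dot_transpose, Matrix.transpose_transpose,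
      Matrix.mulVec_mulVec, hR, Matrix.one_mulVec]
  have e4 : nu ⬝ᵥ (G' *ᵥ (R'ᵀ *ᵥ q)) = (-a) ⬝ᵥ q := by
    rw [dot_transpose, hGn, dot_transpose, Matrix.transpose_transpose,
      Matrix.mulVec_mulVec, hR', Matrix.one_mulVec]
  have key : -(lam ⬝ᵥ (G *ᵥ (Rᵀ *ᵥ p) + g)) - nu ⬝ᵥ (G' *ᵥ (R'ᵀ *ᵥ q) + g') ≤
      a ⬝ᵥ ((R' *ᵥ y₂ + q) - (R *ᵥ y₁ + p)) := by
    have h1' : lam ⬝ᵥ (G *ᵥ y₁) ≤ lam ⬝ᵥ g := by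
      have := h1; rw [dotProduct_sub] at this; linarith
    have h2' : nu ⬝ᵥ (G' *ᵥ y₂) ≤ nu ⬝ᵥ g' := by
      have := h2; rw [dotProduct_sub] at this; linarith
    rw [e1] at h1'; rw [e2, neg_dotProduct] at h2'
    simp only [dotProduct_add, dotProduct_sub, e3, e4, neg_dotProduct]
    linarith
  have hcs : a ⬝ᵥ ((R' *ᵥ y₂ + q) - (R *ᵥ y₁ + p)) ≤
      e2norm ((R *ᵥ y₁ + p) - (R' *ᵥ y₂ + q)) := by
    calc a ⬝ᵥ ((R' *ᵥ y₂ + q) - (R *ᵥ y₁ + p))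
        ≤ e2norm a * e2norm ((R' *ᵥ y₂ + q) - (R *ᵥ y₁ + p)) := cs _ _
      _ ≤ 1 * e2norm ((R' *ᵥ y₂ + q) - (R *ᵥ y₁ + p)) := by
          exact mul_le_mul_of_nonneg_right hnorm (e2norm_nonneg _)
      _ = e2norm ((R *ᵥ y₁ + p) - (R' *ᵥ y₂ + q)) := by
          rw [one_mul, ← e2norm_neg]; congr 1; abel
  linarith
end

section
/- Let S(G, g, R, ·) and S(G', g', R', ·) be cone-represented set families in ℝ^n for the same closed convex cone K ⊆ ℝ^l, let P₁, P₂ ∈ ℝ^{n×m} and p̄, q̄ ∈ ℝ^n. Suppose λ, ν ∈ K* satisfy ‖R Gᵀ λ‖₂ ≤ 1 and R Gᵀ λ = −R' G'ᵀ ν; set Y = −⟨λ, G Rᵀ (p̄ − q̄) + g⟩ − ⟨ν, g'⟩ and w = −(P₁ − P₂)ᵀ R Gᵀ λ. Let ε ∈ (0, 1), let γ ∈ ℝ satisfy Φ(γ) = 1 − ε for the standard Gaussian CDF Φ, let s > 0, and let μ be a probability measure on ℝ^m whose pushforward under v ↦ ⟨w, v⟩ is the real Gaussian measure with mean 0 and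 variance s². If Y ≥ γ s, then μ({v ∈ ℝ^m : S(G, g, R, p̄ + P₁ v) ∩ S(G', g', R', q̄ + P₂ v) = ∅}) ≥ 1 − ε. -/
open Matrix MeasureTheory ProbabilityTheory

/-!
A point `z` common to both sets would give, via the dual multipliers `lam` and `nu`, the
inequality `0 ≤ lam ⬝ᵥ g + nu ⬝ᵥ g' + a ⬝ᵥ (p - q)` with `a = R Gᵀ lam`, because the terms in `z`
cancel by `R Gᵀ lam = -R' G'ᵀ nu`. For the moving centres this quantity is `-Y - w ⬝ᵥ v`, so the
sets are disjoint whenever `w ⬝ᵥ v > -Y`, an event of probability `Φ(Y / s) ≥ Φ(γ) = 1 - ε`.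
-/

theorem dotProduct_mulVec_mulVec_of_transpose_mul_self {ι κ α : Type*} [Fintype ι] [Fintype κ]
    [DecidableEq ι] [CommSemiring α] {R : Matrix κ ι α} (hR : Rᵀ * R = 1) (u x : ι → α) :
    (R *ᵥ u) ⬝ᵥ (R *ᵥ x) = u ⬝ᵥ x := by
  rw [dotProduct_mulVec, ← vecMul_transpose, vecMul_vecMul, hR, vecMul_one]

section ConeSet

variable {n l : ℕ} {K : Set (Fin l → ℝ)} {G G' : Matrix (Fin l) (Fin n) ℝ} {g g' : Fin l → ℝ}
  {R R' : Matrix (Fin n) (Fin n) ℝ} {lam nu : Fin l → ℝ}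

theorem dotProduct_sub_le_of_mem_coneSet (hR : Rᵀ * R = 1) (hlam : lam ∈ dualCone K)
    {p z : Fin n → ℝ} (hz : z ∈ coneSet K G g R p) :
    (R *ᵥ (Gᵀ *ᵥ lam)) ⬝ᵥ (z - p) ≤ lam ⬝ᵥ g := by
  obtain ⟨y, hy, rfl⟩ := hz
  have hdual : 0 ≤ lam ⬝ᵥ g - lam ⬝ᵥ (G *ᵥ y) := dotProduct_sub lam g _ ▸ hlam _ hy
  rw [add_sub_cancel_right, dotProduct_mulVec_mulVec_of_transpose_mul_self hR, mulVec_transpose,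
    ← dotProduct_mulVec]
  linarith

theorem coneSet_inter_coneSet_eq_empty (hR : Rᵀ * R = 1) (hR' : R'ᵀ * R' = 1)
    (hlam : lam ∈ dualCone K) (hnu : nu ∈ dualCone K)
    (heq : R *ᵥ (Gᵀ *ᵥ lam) = -(R' *ᵥ (G'ᵀ *ᵥ nu))) {p q : Fin n → ℝ}
    (hsep : (R *ᵥ (Gᵀ *ᵥ lam)) ⬝ᵥ (p - q) + lam ⬝ᵥ g + nu ⬝ᵥ g' < 0) :
    coneSet K G g R p ∩ coneSet K G' g' R' q = ∅ := by
  refine Set.eq_empty_iff_forall_notMem.mpr fun z ⟨hz, hz'⟩ => hsep.not_ge ?_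
  have h := dotProduct_sub_le_of_mem_coneSet hR hlam hz
  have h' := dotProduct_sub_le_of_mem_coneSet hR' hnu hz'
  rw [← neg_eq_iff_eq_neg.mpr heq] at h'
  simp only [neg_dotProduct, dotProduct_sub] at h h' ⊢
  linarith

theorem coneSet_add_mulVec_inter_eq_empty {m : ℕ} (hR : Rᵀ * R = 1) (hR' : R'ᵀ * R' = 1)
    (hlam : lam ∈ dualCone K) (hnu : nu ∈ dualCone K)
    (heq : R *ᵥ (Gᵀ *ᵥ lam) = -(R' *ᵥ (G'ᵀ *ᵥ nu)))
    {P₁ P₂ : Matrix (Fin n) (Fin m) ℝ} {pbar qbar : Fin n → ℝ} {Y : ℝ}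
    (hY : Y = -(lam ⬝ᵥ (G *ᵥ (Rᵀ *ᵥ (pbar - qbar)) + g)) - nu ⬝ᵥ g')
    {w : Fin m → ℝ} (hw : w = -((P₁ - P₂)ᵀ *ᵥ (R *ᵥ (Gᵀ *ᵥ lam)))) {v : Fin m → ℝ}
    (hv : -Y < w ⬝ᵥ v) :
    coneSet K G g R (pbar + P₁ *ᵥ v) ∩ coneSet K G' g' R' (qbar + P₂ *ᵥ v) = ∅ := by
  refine coneSet_inter_coneSet_eq_empty hR hR' hlam hnu heq ?_
  have hcentre :
      lam ⬝ᵥ (G *ᵥ (Rᵀ *ᵥ (pbar - qbar))) = (R *ᵥ (Gᵀ *ᵥ lam)) ⬝ᵥ (pbar - qbar) := by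
    rw [dotProduct_mulVec, ← mulVec_transpose, dotProduct_mulVec, ← mulVec_transpose,
      transpose_transpose]
  have hnoise : w ⬝ᵥ v = -((R *ᵥ (Gᵀ *ᵥ lam)) ⬝ᵥ ((P₁ - P₂) *ᵥ v)) := by
    rw [hw, neg_dotProduct, mulVec_transpose, ← dotProduct_mulVec]
  rw [hY, hnoise, dotProduct_add, hcentre, sub_mulVec] at hv
  simp only [dotProduct_add, dotProduct_sub] at hv ⊢
  linarith

end ConeSet

theorem gaussianReal_Ioi_neg_mul_eq_ofReal_cdf {s : ℝ} (hs : 0 < s) (γ : ℝ) :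
    gaussianReal 0 ⟨s ^ 2, sq_nonneg s⟩ (Set.Ioi (-(γ * s))) =
      ENNReal.ofReal (cdf (gaussianReal 0 1) γ) := by
  have hmap : (gaussianReal 0 1).map (fun x => -(s * x)) =
      gaussianReal 0 ⟨s ^ 2, sq_nonneg s⟩ := by
    have h := gaussianReal_map_const_mul (μ := 0) (v := 1) (-s)
    simp only [neg_mul, mul_zero, mul_one, even_two, Even.neg_pow] at h
    exact h
  have hpre : (fun x => -(s * x)) ⁻¹' Set.Ioi (-(γ * s)) = Set.Iio γ := by
    ext x
    simp only [Set.mem_preimage, Set.mem_Ioi, Set.mem_Iio]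
    constructor <;> intro h <;> nlinarith
  have hatom : gaussianReal 0 1 {γ} = 0 :=
    gaussianReal_absolutelyContinuous 0 one_ne_zero Real.volume_singleton
  rw [← hmap, Measure.map_apply (by fun_prop) measurableSet_Ioi, hpre, ofReal_cdf,
    measure_congr (Iio_ae_eq_Iic' hatom)]

theorem gaussian_chance_constrained_collision_avoidance_general {n l m : ℕ} (K : Set (Fin l → ℝ))
    (G G' : Matrix (Fin l) (Fin n) ℝ) (g g' : Fin l → ℝ)
    (R R' : Matrix (Fin n) (Fin n) ℝ)
    (hR : R * Rᵀ = 1) (hR' : R' * R'ᵀ = 1)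
    (P₁ P₂ : Matrix (Fin n) (Fin m) ℝ) (pbar qbar : Fin n → ℝ)
    (lam nu : Fin l → ℝ) (hlam : lam ∈ dualCone K) (hnu : nu ∈ dualCone K)
    (heq : R *ᵥ (Gᵀ *ᵥ lam) = -(R' *ᵥ (G'ᵀ *ᵥ nu)))
    (Y : ℝ) (hY : Y = -(lam ⬝ᵥ (G *ᵥ (Rᵀ *ᵥ (pbar - qbar)) + g)) - nu ⬝ᵥ g')
    (w : Fin m → ℝ) (hw : w = -((P₁ - P₂)ᵀ *ᵥ (R *ᵥ (Gᵀ *ᵥ lam))))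
    {ε : ℝ}
    (γ : ℝ) (hγ : cdf (gaussianReal 0 1) γ = 1 - ε)
    {s : ℝ} (hs : 0 < s)
    (μ : Measure (Fin m → ℝ)) [IsProbabilityMeasure μ]
    (hpush : μ.map (fun v => w ⬝ᵥ v) = gaussianReal 0 ⟨s ^ 2, sq_nonneg s⟩)
    (htight : γ * s ≤ Y) :
    ENNReal.ofReal (1 - ε) ≤
      μ {v : Fin m → ℝ |
        coneSet K G g R (pbar + P₁ *ᵥ v) ∩ coneSet K G' g' R' (qbar + P₂ *ᵥ v) = ∅} := by
  have hsafe : {v : Fin m → ℝ | -Y < w ⬝ᵥ v} ⊆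
      {v | coneSet K G g R (pbar + P₁ *ᵥ v) ∩ coneSet K G' g' R' (qbar + P₂ *ᵥ v) = ∅} :=
    fun v hv => coneSet_add_mulVec_inter_eq_empty (mul_eq_one_comm.mp hR)
      (mul_eq_one_comm.mp hR') hlam hnu heq hY hw hv
  have hmeas : Measurable fun v : Fin m → ℝ => w ⬝ᵥ v := by fun_prop
  calc ENNReal.ofReal (1 - ε)
      = gaussianReal 0 ⟨s ^ 2, sq_nonneg s⟩ (Set.Ioi (-(γ * s))) := by
        rw [gaussianReal_Ioi_neg_mul_eq_ofReal_cdf hs, hγ]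
    _ ≤ gaussianReal 0 ⟨s ^ 2, sq_nonneg s⟩ (Set.Ioi (-Y)) :=
        measure_mono (Set.Ioi_subset_Ioi (neg_le_neg htight))
    _ = μ {v | -Y < w ⬝ᵥ v} := by rw [← hpush, Measure.map_apply hmeas measurableSet_Ioi]; rfl
    _ ≤ _ := measure_mono hsafe

theorem gaussian_chance_constrained_collision_avoidance {n l m : ℕ} (K : Set (Fin l → ℝ))
    (hKclosed : IsClosed K) (hKconv : Convex ℝ K)
    (hKcone : ∀ c : ℝ, 0 < c → ∀ x ∈ K, c • x ∈ K)
    (hKint : (interior K).Nonempty)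
    (G G' : Matrix (Fin l) (Fin n) ℝ) (g g' : Fin l → ℝ)
    (R R' : Matrix (Fin n) (Fin n) ℝ)
    (hR : R * Rᵀ = 1) (hR' : R' * R'ᵀ = 1)
    (P₁ P₂ : Matrix (Fin n) (Fin m) ℝ) (pbar qbar : Fin n → ℝ)
    (lam nu : Fin l → ℝ) (hlam : lam ∈ dualCone K) (hnu : nu ∈ dualCone K)
    (hnorm : e2norm (R *ᵥ (Gᵀ *ᵥ lam)) ≤ 1)
    (heq : R *ᵥ (Gᵀ *ᵥ lam) = -(R' *ᵥ (G'ᵀ *ᵥ nu)))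
    (Y : ℝ) (hY : Y = -(lam ⬝ᵥ (G *ᵥ (Rᵀ *ᵥ (pbar - qbar)) + g)) - nu ⬝ᵥ g')
    (w : Fin m → ℝ) (hw : w = -((P₁ - P₂)ᵀ *ᵥ (R *ᵥ (Gᵀ *ᵥ lam))))
    {ε : ℝ} (hε : ε ∈ Set.Ioo (0 : ℝ) 1)
    (γ : ℝ) (hγ : cdf (gaussianReal 0 1) γ = 1 - ε)
    {s : ℝ} (hs : 0 < s)
    (μ : Measure (Fin m → ℝ)) [IsProbabilityMeasure μ]
    (hpush : μ.map (fun v => w ⬝ᵥ v) = gaussianReal 0 ⟨s ^ 2, sq_nonneg s⟩)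
    (htight : γ * s ≤ Y) :
    ENNReal.ofReal (1 - ε) ≤
      μ {v : Fin m → ℝ |
        coneSet K G g R (pbar + P₁ *ᵥ v) ∩ coneSet K G' g' R' (qbar + P₂ *ᵥ v) = ∅} :=
  gaussian_chance_constrained_collision_avoidance_general K G G' g g' R R' hR hR' P₁ P₂ pbar qbar
    lam nu hlam hnu heq Y hY w hw γ hγ hs μ hpush htight
end
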